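/- Let f_1, f_2 ∈ L¹(ℝ^n, ℝ₊) and suppose f_1 is more log-convex than g_{A_1} for a positive-definite symmetric n×n matrix A_1 > 0. Then, without any further assumptions on f_2, the convolution f_1 ∗ f_2 is more log-convex than g_{A_1}; equivalently, x ↦ e^{(1/2)⟨A_1 x, x⟩} (f_1 ∗ f_2)(x) is log-convex. -/

import Mathlib

open MeasureTheory Matrix

/-- The (un-normalized) centered Gaussian `g_A(x) = exp(-(1/2)⟨Ax,x⟩)`. -/
noncomputable def gaussFn {ι : Type*} [Fintype ι] (A : Matrix ι ι ℝ) (x : ι → ℝ) : ℝ :=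
  Real.exp (-(1/2 : ℝ) * (x ⬝ᵥ A.mulVec x))

/-- A nonnegative function is log-convex if
`f(tx + (1-t)y) ≤ f(x)^t f(y)^(1-t)` for all `x, y` and `t ∈ [0,1]`. -/
def IsLogConvex {ι : Type*} (f : (ι → ℝ) → ℝ) : Prop :=
  (∀ x, 0 ≤ f x) ∧ ∀ x y : ι → ℝ, ∀ t : ℝ, 0 ≤ t → t ≤ 1 →
    f (t • x + (1 - t) • y) ≤ f x ^ t * f y ^ (1 - t)

/-- `f` is more log-convex than `g_A` if `f = g_A ⬝ h` with `h` log-convex. -/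
def MoreLogConvexThan {ι : Type*} [Fintype ι] (A : Matrix ι ι ℝ) (f : (ι → ℝ) → ℝ) : Prop :=
  ∃ h : (ι → ℝ) → ℝ, IsLogConvex h ∧ f = fun x => gaussFn A x * h x

/-- The convolution `(f₁ ∗ f₂)(x) = ∫ f₁(x - y) f₂(y) dy`. -/
noncomputable def convFn {ι : Type*} [Fintype ι] (f₁ f₂ : (ι → ℝ) → ℝ) (x : ι → ℝ) : ℝ :=
  ∫ y : ι → ℝ, f₁ (x - y) * f₂ y

/-! Write `f₁ = g_A h` with `h` log-convex. For fixed `y`, the quadratic terms cancel in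
`½⟨Ax,x⟩ - ½⟨A(x-y),x-y⟩`, so `e^{½⟨Ax,x⟩} f₁(x-y) f₂(y)` is the exponential of an affine
function of `x` times the log-convex `h(x-y)` times the constant `f₂(y) ≥ 0`; by Hölder's
inequality an integral of log-convex functions is log-convex.

These integrals are finite because `f₁` is bounded: by the parallelogram law and AM-GM,
`f₁(z) ≤ e^{½⟨Av,v⟩} (f₁(z+v) + f₁(z-v))/2`, and averaging over the unit ball `‖v‖ ≤ 1`
bounds `f₁(z)` by a multiple of `‖f₁‖₁`. -/

open Set
open scoped ENNReal

section LogConvex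

variable {ι : Type*}

lemma isLogConvex_const {c : ℝ} (hc : 0 ≤ c) : IsLogConvex (fun _ : ι → ℝ => c) :=
  ⟨fun _ => hc, fun _ _ t _ _ => by
    rw [← Real.rpow_add' hc (by norm_num), add_sub_cancel, Real.rpow_one]⟩

lemma IsLogConvex.mul {f g : (ι → ℝ) → ℝ} (hf : IsLogConvex f) (hg : IsLogConvex g) :
    IsLogConvex (fun x => f x * g x) := by
  refine ⟨fun x => mul_nonneg (hf.1 x) (hg.1 x), fun x y t ht0 ht1 => ?_⟩
  rw [Real.mul_rpow (hf.1 x) (hg.1 x), Real.mul_rpow (hf.1 y) (hg.1 y)]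
  calc f (t • x + (1 - t) • y) * g (t • x + (1 - t) • y)
      ≤ (f x ^ t * f y ^ (1 - t)) * (g x ^ t * g y ^ (1 - t)) :=
        mul_le_mul (hf.2 x y t ht0 ht1) (hg.2 x y t ht0 ht1) (hg.1 _)
          (mul_nonneg (Real.rpow_nonneg (hf.1 x) t) (Real.rpow_nonneg (hf.1 y) _))
    _ = f x ^ t * g x ^ t * (f y ^ (1 - t) * g y ^ (1 - t)) := by ring

lemma IsLogConvex.comp_sub_const {f : (ι → ℝ) → ℝ} (hf : IsLogConvex f) (y : ι → ℝ) :
    IsLogConvex (fun x => f (x - y)) := by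
  refine ⟨fun x => hf.1 _, fun x x' t ht0 ht1 => ?_⟩
  show f (t • x + (1 - t) • x' - y) ≤ f (x - y) ^ t * f (x' - y) ^ (1 - t)
  rw [show t • x + (1 - t) • x' - y = t • (x - y) + (1 - t) • (x' - y) by module]
  exact hf.2 _ _ t ht0 ht1

lemma ConvexOn.isLogConvex_exp {φ : (ι → ℝ) → ℝ} (hφ : ConvexOn ℝ univ φ) :
    IsLogConvex (fun x => Real.exp (φ x)) := by
  refine ⟨fun x => (Real.exp_pos _).le, fun x y t ht0 ht1 => ?_⟩
  rw [← Real.exp_mul, ← Real.exp_mul, ← Real.exp_add, Real.exp_le_exp]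
  have := hφ.2 (mem_univ x) (mem_univ y) ht0 (sub_nonneg.2 ht1) (add_sub_cancel t 1)
  simp only [smul_eq_mul] at this
  linarith

lemma ENNReal.ofReal_rpow_mul_rpow {a b s u : ℝ} (ha : 0 ≤ a) (hb : 0 ≤ b) (hs : 0 ≤ s)
    (hu : 0 ≤ u) :
    ENNReal.ofReal (a ^ s * b ^ u) = ENNReal.ofReal a ^ s * ENNReal.ofReal b ^ u := by
  rw [ENNReal.ofReal_mul (Real.rpow_nonneg ha s), ENNReal.ofReal_rpow_of_nonneg ha hs,
    ENNReal.ofReal_rpow_of_nonneg hb hu]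

theorem IsLogConvex.integral {α : Type*} [MeasurableSpace α] {μ : Measure α}
    {F : (ι → ℝ) → α → ℝ} (hF : ∀ w, IsLogConvex (F · w)) (hint : ∀ x, Integrable (F x) μ) :
    IsLogConvex (fun x => ∫ w, F x w ∂μ) := by
  have hF0 : ∀ x w, 0 ≤ F x w := fun x w => (hF w).1 x
  have hlint : ∀ x, ENNReal.ofReal (∫ w, F x w ∂μ) = ∫⁻ w, ENNReal.ofReal (F x w) ∂μ :=
    fun x => ofReal_integral_eq_lintegral_ofReal (hint x) (ae_of_all _ (hF0 x))
  have hmeas : ∀ x, AEMeasurable (fun w => ENNReal.ofReal (F x w)) μ :=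
    fun x => (hint x).aemeasurable.ennreal_ofReal
  refine ⟨fun x => integral_nonneg (hF0 x), fun x y t ht0 ht1 => ?_⟩
  have hI : ∀ x, 0 ≤ ∫ w, F x w ∂μ := fun x => integral_nonneg (hF0 x)
  rw [← ENNReal.ofReal_le_ofReal_iff
      (mul_nonneg (Real.rpow_nonneg (hI x) t) (Real.rpow_nonneg (hI y) _)),
    ENNReal.ofReal_rpow_mul_rpow (hI x) (hI y) ht0 (sub_nonneg.2 ht1), hlint, hlint, hlint]
  calc ∫⁻ w, ENNReal.ofReal (F (t • x + (1 - t) • y) w) ∂μ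
      ≤ ∫⁻ w, ENNReal.ofReal (F x w) ^ t * ENNReal.ofReal (F y w) ^ (1 - t) ∂μ :=
        lintegral_mono fun w => by
          rw [← ENNReal.ofReal_rpow_mul_rpow (hF0 x w) (hF0 y w) ht0 (sub_nonneg.2 ht1)]
          exact ENNReal.ofReal_le_ofReal ((hF w).2 x y t ht0 ht1)
    _ ≤ _ := ENNReal.lintegral_mul_norm_pow_le (hmeas x) (hmeas y) ht0 (sub_nonneg.2 ht1)
        (add_sub_cancel t 1)

end LogConvex

theorem MeasureTheory.Integrable.bddAbove_range_of_le_mul_add_sub {G : Type*} [AddGroup G] [MeasurableSpace G]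
    [MeasurableAdd G] [MeasurableNeg G] {μ : Measure G} [μ.IsAddLeftInvariant] [μ.IsNegInvariant]
    {f : G → ℝ} (hf : Integrable f μ) (hf0 : ∀ x, 0 ≤ f x) {s : Set G} (hs : MeasurableSet s)
    (hs0 : μ s ≠ 0) (hs_top : μ s ≠ ∞) {C : ℝ}
    (hC : ∀ z, ∀ v ∈ s, f z ≤ C * (f (z + v) + f (z - v))) :
    BddAbove (range f) := by
  set I := ∫⁻ x, ENNReal.ofReal (f x) ∂μ
  have hbound : ∀ z, μ s * ENNReal.ofReal (f z) ≤ ENNReal.ofReal C * (2 * I) := by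
    intro z
    have hmeas : AEMeasurable (fun v => ENNReal.ofReal (f (z + v))) μ :=
      hf.aemeasurable.ennreal_ofReal.comp_quasiMeasurePreserving
        (measurePreserving_add_left μ z).quasiMeasurePreserving
    calc μ s * ENNReal.ofReal (f z) = ∫⁻ _ in s, ENNReal.ofReal (f z) ∂μ := by
          rw [setLIntegral_const, mul_comm]
      _ ≤ ∫⁻ v in s, ENNReal.ofReal C *
            (ENNReal.ofReal (f (z + v)) + ENNReal.ofReal (f (z - v))) ∂μ :=
          setLIntegral_mono' hs fun v hv => by
            rw [← ENNReal.ofReal_add (hf0 _) (hf0 _),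
              ← ENNReal.ofReal_mul' (add_nonneg (hf0 _) (hf0 _))]
            exact ENNReal.ofReal_le_ofReal (hC z v hv)
      _ ≤ ∫⁻ v, ENNReal.ofReal C *
            (ENNReal.ofReal (f (z + v)) + ENNReal.ofReal (f (z - v))) ∂μ :=
          setLIntegral_le_lintegral _ _
      _ = ENNReal.ofReal C * (2 * I) := by
          rw [lintegral_const_mul' _ _ ENNReal.ofReal_ne_top, lintegral_add_left' hmeas,
            lintegral_add_left_eq_self (fun x => ENNReal.ofReal (f x)),
            lintegral_sub_left_eq_self (fun x => ENNReal.ofReal (f x)), two_mul]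
  have hfin : ENNReal.ofReal C * (2 * I) / μ s ≠ ∞ :=
    (ENNReal.div_lt_top (ENNReal.mul_ne_top ENNReal.ofReal_ne_top
      (ENNReal.mul_ne_top ENNReal.ofNat_ne_top hf.lintegral_lt_top.ne)) hs0).ne
  refine ⟨(ENNReal.ofReal C * (2 * I) / μ s).toReal, ?_⟩
  rintro _ ⟨z, rfl⟩
  rw [← ENNReal.ofReal_le_iff_le_toReal hfin,
    ENNReal.le_div_iff_mul_le (Or.inl hs0) (Or.inl hs_top), mul_comm]
  exact hbound z

section Gaussian

variable {ι : Type*} [Fintype ι]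

lemma dotProduct_mulVec_add_add_dotProduct_mulVec_sub (A : Matrix ι ι ℝ) (z v : ι → ℝ) :
    (z + v) ⬝ᵥ A *ᵥ (z + v) + (z - v) ⬝ᵥ A *ᵥ (z - v) = 2 * (z ⬝ᵥ A *ᵥ z) + 2 * (v ⬝ᵥ A *ᵥ v) := by
  simp only [mulVec_add, mulVec_sub, dotProduct_add, dotProduct_sub, add_dotProduct,
    sub_dotProduct]
  ring

lemma convexOn_dotProduct_mulVec_sub_dotProduct_mulVec_sub (A : Matrix ι ι ℝ) (y : ι → ℝ) :
    ConvexOn ℝ univ (fun x => x ⬝ᵥ A *ᵥ x - (x - y) ⬝ᵥ A *ᵥ (x - y)) := by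
  refine ⟨convex_univ, fun x _ x' _ a b _ _ hab => le_of_eq ?_⟩
  simp only [mulVec_add, mulVec_sub, mulVec_smul, dotProduct_add, dotProduct_sub, add_dotProduct,
    sub_dotProduct, dotProduct_smul, smul_dotProduct, smul_eq_mul]
  linear_combination (y ⬝ᵥ A *ᵥ y) * hab

variable {A : Matrix ι ι ℝ}

lemma MoreLogConvexThan.nonneg {f : (ι → ℝ) → ℝ} (hf : MoreLogConvexThan A f) (x : ι → ℝ) :
    0 ≤ f x := by
  obtain ⟨h, hh, rfl⟩ := hf
  exact mul_nonneg (Real.exp_pos _).le (hh.1 x)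

theorem MoreLogConvexThan.le_exp_mul_midpoint {f : (ι → ℝ) → ℝ} (hf : MoreLogConvexThan A f)
    (z v : ι → ℝ) :
    f z ≤ Real.exp ((1/2) * (v ⬝ᵥ A *ᵥ v)) * ((f (z + v) + f (z - v)) / 2) := by
  obtain ⟨h, hh, rfl⟩ := hf
  have hmid : h z ≤ h (z + v) ^ (1/2 : ℝ) * h (z - v) ^ (1/2 : ℝ) := by
    have := hh.2 (z + v) (z - v) (1/2) (by norm_num) (by norm_num)
    rwa [show (1 : ℝ) - 1/2 = 1/2 by norm_num,
      show (1/2 : ℝ) • (z + v) + (1/2 : ℝ) • (z - v) = z by module] at this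
  have hgauss : gaussFn A z = Real.exp ((1/2) * (v ⬝ᵥ A *ᵥ v)) *
      (gaussFn A (z + v) ^ (1/2 : ℝ) * gaussFn A (z - v) ^ (1/2 : ℝ)) := by
    simp only [gaussFn, ← Real.exp_mul, ← Real.exp_add]
    congr 1
    linear_combination (1/4 : ℝ) * dotProduct_mulVec_add_add_dotProduct_mulVec_sub A z v
  have hg : ∀ x, 0 ≤ gaussFn A x := fun x => (Real.exp_pos _).le
  calc gaussFn A z * h z ≤ gaussFn A z * (h (z + v) ^ (1/2 : ℝ) * h (z - v) ^ (1/2 : ℝ)) :=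
        mul_le_mul_of_nonneg_left hmid (hg z)
    _ = Real.exp ((1/2) * (v ⬝ᵥ A *ᵥ v)) * ((gaussFn A (z + v) * h (z + v)) ^ (1/2 : ℝ) *
          (gaussFn A (z - v) * h (z - v)) ^ (1/2 : ℝ)) := by
        rw [hgauss, Real.mul_rpow (hg _) (hh.1 _), Real.mul_rpow (hg _) (hh.1 _)]
        ring
    _ ≤ Real.exp ((1/2) * (v ⬝ᵥ A *ᵥ v)) * ((1/2) * (gaussFn A (z + v) * h (z + v)) +
          (1/2) * (gaussFn A (z - v) * h (z - v))) := by
        gcongr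
        exact Real.geom_mean_le_arith_mean2_weighted (by norm_num) (by norm_num)
          (mul_nonneg (hg _) (hh.1 _)) (mul_nonneg (hg _) (hh.1 _)) (by norm_num)
    _ = _ := by ring

theorem MoreLogConvexThan.bddAbove_range {f : (ι → ℝ) → ℝ} (hf : MoreLogConvexThan A f)
    (hint : Integrable f) : BddAbove (range f) := by
  obtain ⟨K, hK⟩ := (isCompact_closedBall (0 : ι → ℝ) 1).bddAbove_image
    (f := fun v => v ⬝ᵥ A *ᵥ v) (by fun_prop)
  refine hint.bddAbove_range_of_le_mul_add_sub hf.nonneg measurableSet_closedBall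
    (Metric.measure_closedBall_pos volume 0 one_pos).ne' measure_closedBall_lt_top.ne
    (C := Real.exp ((1/2) * K) / 2) fun z v hv => ?_
  calc f z ≤ Real.exp ((1/2) * (v ⬝ᵥ A *ᵥ v)) * ((f (z + v) + f (z - v)) / 2) :=
        hf.le_exp_mul_midpoint z v
    _ ≤ Real.exp ((1/2) * K) * ((f (z + v) + f (z - v)) / 2) := by
        have := hf.nonneg (z + v)
        have := hf.nonneg (z - v)
        gcongr
        exact hK (mem_image_of_mem _ hv)
    _ = _ := by ring

lemma MoreLogConvexThan.of_isLogConvex_exp_mul {f : (ι → ℝ) → ℝ}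
    (hf : IsLogConvex (fun x => Real.exp ((1/2 : ℝ) * (x ⬝ᵥ A *ᵥ x)) * f x)) :
    MoreLogConvexThan A f :=
  ⟨_, hf, funext fun x => by
    rw [gaussFn, ← mul_assoc, ← Real.exp_add, neg_mul, neg_add_cancel, Real.exp_zero, one_mul]⟩

theorem MoreLogConvexThan.isLogConvex_exp_mul_convFn {f₁ f₂ : (ι → ℝ) → ℝ}
    (hf₁ : MoreLogConvexThan A f₁) (hf₁int : Integrable f₁) (hf₂int : Integrable f₂)
    (hf₂nn : ∀ x, 0 ≤ f₂ x) :
    IsLogConvex (fun x => Real.exp ((1/2 : ℝ) * (x ⬝ᵥ A *ᵥ x)) * convFn f₁ f₂ x) := by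
  obtain ⟨M, hM⟩ := hf₁.bddAbove_range hf₁int
  have hint : ∀ x, Integrable (fun y => f₁ (x - y) * f₂ y) := fun x =>
    hf₂int.bdd_mul (c := M) (hf₁int.aestronglyMeasurable.comp_quasiMeasurePreserving
      (Measure.measurePreserving_sub_left volume x).quasiMeasurePreserving)
      (ae_of_all _ fun y => by
        rw [Real.norm_of_nonneg (hf₁.nonneg _)]
        exact hM (mem_range_self _))
  simp only [convFn, ← integral_const_mul]
  refine IsLogConvex.integral (fun y => ?_) fun x => (hint x).const_mul _
  obtain ⟨h, hh, rfl⟩ := hf₁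
  have hexp : ∀ x, Real.exp ((1/2 : ℝ) * (x ⬝ᵥ A *ᵥ x)) * (gaussFn A (x - y) * h (x - y) * f₂ y)
      = Real.exp ((1/2 : ℝ) • (x ⬝ᵥ A *ᵥ x - (x - y) ⬝ᵥ A *ᵥ (x - y))) * h (x - y) * f₂ y := by
    intro x
    rw [gaussFn, smul_eq_mul, mul_sub, Real.exp_sub, neg_mul, Real.exp_neg]
    ring
  simp only [hexp]
  exact (((convexOn_dotProduct_mulVec_sub_dotProduct_mulVec_sub A y).smul
    (by norm_num)).isLogConvex_exp.mul (hh.comp_sub_const y)).mul (isLogConvex_const (hf₂nn y))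

end Gaussian

theorem convolution_more_log_convex_one_sided_general (n : ℕ)
    (f₁ f₂ : (Fin n → ℝ) → ℝ) (hf₁int : Integrable f₁) (hf₂int : Integrable f₂)
    (hf₂nn : ∀ x, 0 ≤ f₂ x)
    (A₁ : Matrix (Fin n) (Fin n) ℝ)
    (hf₁ : MoreLogConvexThan A₁ f₁) :
    MoreLogConvexThan A₁ (convFn f₁ f₂) ∧
      IsLogConvex (fun x => Real.exp ((1/2 : ℝ) * (x ⬝ᵥ A₁.mulVec x)) * convFn f₁ f₂ x) := by
  have h := hf₁.isLogConvex_exp_mul_convFn hf₁int hf₂int hf₂nn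
  exact ⟨.of_isLogConvex_exp_mul h, h⟩

/-- If `f₁ ∈ L¹(ℝ^n, ℝ₊)` is more log-convex than `g_{A₁}`, `A₁ > 0`, then without any
further assumptions on `f₂ ∈ L¹(ℝ^n, ℝ₊)`, the convolution `f₁ ∗ f₂` is also more log-convex
than `g_{A₁}`; equivalently, `x ↦ e^{(1/2)⟨A₁x,x⟩}(f₁ ∗ f₂)(x)` is log-convex. -/
theorem convolution_more_log_convex_one_sided (n : ℕ)
    (f₁ f₂ : (Fin n → ℝ) → ℝ) (hf₁int : Integrable f₁) (hf₂int : Integrable f₂)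
    (hf₁nn : ∀ x, 0 ≤ f₁ x) (hf₂nn : ∀ x, 0 ≤ f₂ x)
    (A₁ : Matrix (Fin n) (Fin n) ℝ) (hA₁ : A₁.PosDef)
    (hf₁ : MoreLogConvexThan A₁ f₁) :
    MoreLogConvexThan A₁ (convFn f₁ f₂) ∧
      IsLogConvex (fun x => Real.exp ((1/2 : ℝ) * (x ⬝ᵥ A₁.mulVec x)) * convFn f₁ f₂ x) :=
  convolution_more_log_convex_one_sided_general n f₁ f₂ hf₁int hf₂int hf₂nn A₁ hf₁
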